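/- arXiv:2210.03095 — 3 statements merged into one kernel-verified Lean document; each statement's English description precedes it below -/
import Mathlib

section
/- Suppose h = 1 and k ≥ 2 (so S has degree 2Δk² and we consider Hilb^{Δ+1}(S)). Then there exists no numerical wall datum w = (a,b,c) ∈ ℤ³. (This is the arithmetic core of the Corollary recovering the Markushevich–Sawon theorem: the movable cone of Hilb^{Δ+1}(S) has one chamber and Hilb^{Δ+1}(S) is a Lagrangian fibration.) -/
/-- The Mukai pairing on the algebraic Mukai lattice ℤ³ of a K3 surface `S` with
`Pic(S) = ℤ·H`, `H² = 2Δk²`, identifying `(r, xH, s)` with `(r, x, s)`: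
`⟨(r,x,s),(r′,x′,s′)⟩ = 2Δk²xx′ − rs′ − r′s`. -/
def mukaiPair (Δ k : ℤ) (w w' : ℤ × ℤ × ℤ) : ℤ :=
  2 * Δ * k ^ 2 * w.2.1 * w'.2.1 - w.1 * w'.2.2 - w'.1 * w.2.2

/-- The Mukai vector `v = (1, 0, −Δh²)` of the Hilbert scheme of `Δh²+1` points. -/
def mukaiV (Δ h : ℤ) : ℤ × ℤ × ℤ := (1, 0, -(Δ * h ^ 2))

/-- The slope `Γ = −2Δk²b / (Δh²a + c)` associated to `w = (a,b,c)`. -/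
def wallGamma (Δ h k : ℤ) (w : ℤ × ℤ × ℤ) : ℚ :=
  ((-(2 * Δ * k ^ 2 * w.2.1) : ℤ) : ℚ) / ((Δ * h ^ 2 * w.1 + w.2.2 : ℤ) : ℚ)

/-- `w = (a,b,c) ∈ ℤ³` is a numerical wall datum (for the interior of the movable cone of
`Hilb^{Δh²+1}(S)`) if:
(W1) `Δh²a + c ≠ 0` and `Γ := −2Δk²b/(Δh²a + c)` satisfies `2k²/(h²+k²+1) ≤ Γ < k/h`;
(W2) `Γ·b + a ≥ 0` and `−Γ·b + 1 − a ≥ 0`;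
(W3) either `⟨w,w⟩ = −2` and `−Δh² ≤ ⟨w,v⟩ ≤ Δh²`, or `⟨w,w⟩ ≥ 0`, `2⟨w,w⟩ < Δh²` and
     `2⟨w,w⟩ + 1 ≤ ⟨w,v⟩ ≤ Δh²`;
(W4) `⟨w,v⟩² > 2Δh²·⟨w,w⟩`. -/
def IsWallDatum (Δ h k : ℤ) (w : ℤ × ℤ × ℤ) : Prop :=
  Δ * h ^ 2 * w.1 + w.2.2 ≠ 0 ∧
  (2 * (k : ℚ) ^ 2 / ((h : ℚ) ^ 2 + (k : ℚ) ^ 2 + 1) ≤ wallGamma Δ h k w ∧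
    wallGamma Δ h k w < (k : ℚ) / (h : ℚ)) ∧
  (0 ≤ wallGamma Δ h k w * (w.2.1 : ℚ) + (w.1 : ℚ) ∧
    0 ≤ -(wallGamma Δ h k w * (w.2.1 : ℚ)) + 1 - (w.1 : ℚ)) ∧
  ((mukaiPair Δ k w w = -2 ∧ -(Δ * h ^ 2) ≤ mukaiPair Δ k w (mukaiV Δ h) ∧
      mukaiPair Δ k w (mukaiV Δ h) ≤ Δ * h ^ 2) ∨
    (0 ≤ mukaiPair Δ k w w ∧ 2 * mukaiPair Δ k w w < Δ * h ^ 2 ∧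
      2 * mukaiPair Δ k w w + 1 ≤ mukaiPair Δ k w (mukaiV Δ h) ∧
      mukaiPair Δ k w (mukaiV Δ h) ≤ Δ * h ^ 2)) ∧
  (mukaiPair Δ k w (mukaiV Δ h)) ^ 2 > 2 * Δ * h ^ 2 * mukaiPair Δ k w w

/-!
Write `j = ⟨w, v⟩`, `q = ⟨w, w⟩` and `D = Δa + c` for the denominator of `Γ`, so that (W4) says
that `E = j² - 2Δq` is positive. Then `D² = (2Δkb)² + E`, hence `|D| = M + r` with `M = 2Δk|b|`
and `r ≥ 1`, and `E = r(2M + r) > r|D|` because `b ≠ 0` (as `Γ > 0`). Condition (W2) says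
`0 ≤ (E + Dj) / 2ΔD ≤ 1`, and `2Δ` divides both `M` and `D + j = 2Δa`, while `|j| ≤ Δ` by (W3).
If `D < 0`, this gives `r < j ≤ Δ` with `2Δ ∣ j - r`, which is impossible. If `D > 0`, it gives
`-Δ < r + j < 2Δ` with `2Δ ∣ r + j`, so `j = -r` and `q = -2k|b|r ≤ -4` as `k ≥ 2`,
contradicting (W3).
-/

theorem exists_abs_eq_add_of_sq_eq_sq_add {R : Type*} [CommRing R] [LinearOrder R]
    [IsStrictOrderedRing R] {D M E : R} (hM : 0 ≤ M) (hE : 0 < E) (h : D ^ 2 = M ^ 2 + E) :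
    ∃ r, 0 < r ∧ |D| = M + r ∧ E = r * (2 * M + r) := by
  have hMD : M < |D| := by
    simpa only [abs_of_nonneg hM] using sq_lt_sq.mp (show M ^ 2 < D ^ 2 by linarith)
  exact ⟨|D| - M, sub_pos.mpr hMD, by ring, by linear_combination -h - sq_abs D⟩

def wallDenom (Δ h : ℤ) (w : ℤ × ℤ × ℤ) : ℤ := Δ * h ^ 2 * w.1 + w.2.2

/-- The numerator of `Γ·b + a = wallNum / wallDenom`. -/
def wallNum (Δ h k : ℤ) (w : ℤ × ℤ × ℤ) : ℤ := w.1 * wallDenom Δ h w - 2 * Δ * k ^ 2 * w.2.1 ^ 2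

section Identities

variable (Δ h k : ℤ) (w : ℤ × ℤ × ℤ)

theorem wallDenom_sq : wallDenom Δ h w ^ 2 = (2 * Δ * h * k * w.2.1) ^ 2 +
    (mukaiPair Δ k w (mukaiV Δ h) ^ 2 - 2 * Δ * h ^ 2 * mukaiPair Δ k w w) := by
  simp only [wallDenom, mukaiPair, mukaiV]; ring

theorem two_mul_wallNum : 2 * Δ * h ^ 2 * wallNum Δ h k w =
    mukaiPair Δ k w (mukaiV Δ h) ^ 2 - 2 * Δ * h ^ 2 * mukaiPair Δ k w w +
      wallDenom Δ h w * mukaiPair Δ k w (mukaiV Δ h) := by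
  simp only [wallNum, wallDenom, mukaiPair, mukaiV]; ring

theorem dvd_wallDenom_add : 2 * Δ * h ^ 2 ∣ wallDenom Δ h w + mukaiPair Δ k w (mukaiV Δ h) :=
  ⟨w.1, by simp only [wallDenom, mukaiPair, mukaiV]; ring⟩

theorem wallGamma_mul_add (hD : wallDenom Δ h w ≠ 0) :
    wallGamma Δ h k w * w.2.1 + w.1 = (wallNum Δ h k w : ℚ) / wallDenom Δ h w := by
  have hD' : (wallDenom Δ h w : ℚ) ≠ 0 := Int.cast_ne_zero.mpr hD
  simp only [wallDenom] at hD'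
  simp only [wallGamma, wallNum, wallDenom]
  push_cast at hD' ⊢
  field_simp
  ring

end Identities

namespace IsWallDatum

variable {Δ h k : ℤ} {w : ℤ × ℤ × ℤ}

theorem snd_ne_zero (hw : IsWallDatum Δ h k w) (hk : k ≠ 0) : w.2.1 ≠ 0 := by
  intro hb
  have hΓ := hw.2.1.1
  have hk' : (k : ℚ) ≠ 0 := Int.cast_ne_zero.mpr hk
  simp only [wallGamma, hb, mul_zero, neg_zero, Int.cast_zero, zero_div] at hΓ
  have : 0 < 2 * (k : ℚ) ^ 2 / ((h : ℚ) ^ 2 + (k : ℚ) ^ 2 + 1) := by positivity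
  linarith

theorem wallNum_le_wallDenom (hw : IsWallDatum Δ h k w) (hD : 0 < wallDenom Δ h w) :
    wallNum Δ h k w ≤ wallDenom Δ h w := by
  have h2 := hw.2.2.1.2
  rw [← Int.cast_le (R := ℚ), ← div_le_one (by exact_mod_cast hD),
    ← wallGamma_mul_add Δ h k w hD.ne']
  linarith

theorem wallNum_nonpos (hw : IsWallDatum Δ h k w) (hD : wallDenom Δ h w < 0) :
    wallNum Δ h k w ≤ 0 := by
  have h2 := hw.2.2.1.1
  rw [wallGamma_mul_add Δ h k w hD.ne, le_div_iff_of_neg (by exact_mod_cast hD), zero_mul] at h2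
  exact_mod_cast h2

theorem neg_two_le_mukaiPair_self (hw : IsWallDatum Δ h k w) : -2 ≤ mukaiPair Δ k w w := by
  rcases hw.2.2.2.1 with ⟨hq, -⟩ | ⟨hq, -⟩ <;> omega

theorem abs_mukaiPair_mukaiV_le (hw : IsWallDatum Δ h k w) :
    |mukaiPair Δ k w (mukaiV Δ h)| ≤ Δ * h ^ 2 := by
  rw [abs_le]
  rcases hw.2.2.2.1 with ⟨-, h1, h2⟩ | ⟨h0, h1, h2, h3⟩ <;> constructor <;> linarith

end IsWallDatum

theorem false_of_wall_conditions {Δ k b D j q P : ℤ} (hΔ : 0 < Δ) (hk : 2 ≤ k) (hb : b ≠ 0)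
    (hsq : D ^ 2 = (2 * Δ * k * b) ^ 2 + (j ^ 2 - 2 * Δ * q))
    (hP : 2 * Δ * P = j ^ 2 - 2 * Δ * q + D * j) (hdvd : 2 * Δ ∣ D + j)
    (hpos : 0 < D → P ≤ D) (hneg : D < 0 → P ≤ 0)
    (hj : |j| ≤ Δ) (hq : -2 ≤ q) (hdisc : 2 * Δ * q < j ^ 2) : False := by
  obtain ⟨hj₁, hj₂⟩ := abs_le.mp hj
  have hkb : 2 ≤ k * |b| := by nlinarith [Int.one_le_abs hb]
  set M := 2 * Δ * (k * |b|) with hM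
  have hM0 : 0 < M := by positivity
  have hMdvd : 2 * Δ ∣ M := dvd_mul_right _ _
  obtain ⟨r, hr, hDr, hE⟩ := exists_abs_eq_add_of_sq_eq_sq_add hM0.le (sub_pos.mpr hdisc)
    (by rw [hsq, hM]; linear_combination (-4 * Δ ^ 2 * k ^ 2) * sq_abs b)
  have hrD : r * |D| < j ^ 2 - 2 * Δ * q := by rw [hDr, hE]; nlinarith
  rcases abs_choice D with hD | hD
  · rw [hD] at hDr hrD
    have hlt : r + j < 2 * Δ := by
      have hPD := hpos (by linarith)
      nlinarith
    have hrj : r + j = 0 :=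
      Int.eq_zero_of_abs_lt_dvd ((dvd_add_right hMdvd).mp (by rwa [← add_assoc, ← hDr]))
        (abs_lt.mpr ⟨by linarith, hlt⟩)
    have hq_eq : Δ * q = -(M * r) := by nlinarith
    nlinarith
  · rw [hD] at hDr hrD
    have hP0 := hneg (by linarith)
    have hjr : r < j := by nlinarith
    have hdvd' : 2 * Δ ∣ j - r := by
      rw [show j - r = D + j + M by linarith]
      exact dvd_add hdvd hMdvd
    have hjr' := Int.eq_zero_of_abs_lt_dvd hdvd' (abs_lt.mpr ⟨by linarith, by linarith⟩)
    omega

theorem no_wall_datum_of_h_eq_one_general (Δ h k : ℤ) (hΔ : 0 < Δ) (hh : h = 1) (hk : 2 ≤ k) :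
    ¬ ∃ w : ℤ × ℤ × ℤ, IsWallDatum Δ h k w := by
  subst hh
  rintro ⟨w, hw⟩
  have hsq := wallDenom_sq Δ 1 k w
  have hnum := two_mul_wallNum Δ 1 k w
  have hdvd := dvd_wallDenom_add Δ 1 k w
  have hj := hw.abs_mukaiPair_mukaiV_le
  have hdisc := hw.2.2.2.2
  simp only [one_pow, mul_one] at hsq hnum hdvd hj hdisc
  exact false_of_wall_conditions hΔ hk (hw.snd_ne_zero (by omega)) hsq hnum hdvd
    hw.wallNum_le_wallDenom hw.wallNum_nonpos hj hw.neg_two_le_mukaiPair_self hdisc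

/-- Corollary (Markushevich–Sawon, arithmetic core): if `h = 1` and `k ≥ 2` then there is
no numerical wall datum, so the movable cone of `Hilb^{Δ+1}(S)` has one chamber. -/
theorem no_wall_datum_of_h_eq_one (Δ h k : ℤ) (hΔ : 0 < Δ) (hh : h = 1) (hk : 2 ≤ k)
    (hgcd : Int.gcd h k = 1) :
    ¬ ∃ w : ℤ × ℤ × ℤ, IsWallDatum Δ h k w :=
  no_wall_datum_of_h_eq_one_general Δ h k hΔ hh hk
end

section
/- If w = (0,b,c) ∈ ℤ³ is a numerical wall datum with first coordinate a = 0, then 4k²b² < h². In particular, since b ≠ 0 for any numerical wall datum, no numerical wall datum with a = 0 exists when 2k ≥ h. (Case 1 of the proof of the Main Theorem.) -/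
/-! When `a = 0` the vector `w = (0, b, c)` has `⟨w,w⟩ = 2Δk²b² ≥ 0`, so (W3) forces its second
branch and `2⟨w,w⟩ < Δh²` reads `4k²b² < h²`. The lower bound in (W1) makes `Γ` positive, hence
`b ≠ 0`, so `4k² ≤ 4k²b² < h²`, which is impossible when `h ≤ 2k`. -/

theorem mukaiPair_self_of_fst_eq_zero (Δ k b c : ℤ) :
    mukaiPair Δ k (0, b, c) (0, b, c) = 2 * Δ * k ^ 2 * b ^ 2 := by
  simp only [mukaiPair]
  ring

namespace IsWallDatum

variable {Δ h k : ℤ} {w : ℤ × ℤ × ℤ}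

theorem two_mul_mukaiPair_self_lt (hw : IsWallDatum Δ h k w) (hnonneg : 0 ≤ mukaiPair Δ k w w) :
    2 * mukaiPair Δ k w w < Δ * h ^ 2 := by
  obtain ⟨-, -, -, ⟨hneg, -⟩ | ⟨-, hlt, -⟩, -⟩ := hw
  · omega
  · exact hlt

theorem wallGamma_pos (hw : IsWallDatum Δ h k w) (hk : k ≠ 0) : 0 < wallGamma Δ h k w := by
  have hbound : (0 : ℚ) < 2 * (k : ℚ) ^ 2 / ((h : ℚ) ^ 2 + (k : ℚ) ^ 2 + 1) := by positivity
  exact hbound.trans_le hw.2.1.1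

theorem four_mul_sq_mul_sq_lt_of_fst_eq_zero {b c : ℤ} (hw : IsWallDatum Δ h k (0, b, c))
    (hΔ : 0 < Δ) : 4 * k ^ 2 * b ^ 2 < h ^ 2 := by
  have hlt := hw.two_mul_mukaiPair_self_lt (by rw [mukaiPair_self_of_fst_eq_zero]; positivity)
  rw [mukaiPair_self_of_fst_eq_zero] at hlt
  have hΔlt : Δ * (4 * k ^ 2 * b ^ 2) < Δ * h ^ 2 := by linarith
  exact lt_of_mul_lt_mul_left hΔlt hΔ.le

end IsWallDatum

theorem wall_datum_case_a_eq_zero_general (Δ h k : ℤ) (hΔ : 0 < Δ) (hh : 0 < h) (hk : 0 < k) :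
    (∀ b c : ℤ, IsWallDatum Δ h k (0, b, c) → 4 * k ^ 2 * b ^ 2 < h ^ 2) ∧
    (2 * k ≥ h → ¬ ∃ b c : ℤ, IsWallDatum Δ h k (0, b, c)) := by
  refine ⟨fun b c hw => hw.four_mul_sq_mul_sq_lt_of_fst_eq_zero hΔ, ?_⟩
  rintro hkh ⟨b, c, hw⟩
  have hlt := hw.four_mul_sq_mul_sq_lt_of_fst_eq_zero hΔ
  have hb : 1 ≤ b ^ 2 :=
    (one_le_sq_iff_one_le_abs b).mpr (Int.one_le_abs (hw.snd_ne_zero hk.ne'))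
  have hh2 : h ^ 2 ≤ (2 * k) ^ 2 := pow_le_pow_left₀ hh.le hkh 2
  nlinarith

/-- Case 1 of the proof of the Main Theorem: a numerical wall datum with `a = 0` satisfies
`4k²b² < h²`; in particular none exists when `2k ≥ h`. -/
theorem wall_datum_case_a_eq_zero (Δ h k : ℤ) (hΔ : 0 < Δ) (hh : 0 < h) (hk : 0 < k)
    (hgcd : Int.gcd h k = 1) :
    (∀ b c : ℤ, IsWallDatum Δ h k (0, b, c) → 4 * k ^ 2 * b ^ 2 < h ^ 2) ∧
    (2 * k ≥ h → ¬ ∃ b c : ℤ, IsWallDatum Δ h k (0, b, c)) :=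
  wall_datum_case_a_eq_zero_general Δ h k hΔ hh hk
end

section
/- Suppose h ≥ 2 and w = (a,b,c) ∈ ℤ³ is a numerical wall datum with a ≥ 2. Then: b < 0; ha + kb ≤ h − 1; −Δh² ≤ j(w) < 2Δh(ha + kb); a ≤ Δ(h−1)² + 1; and 2k(−b) < 2Δh(h−1)² + 3h. In particular no numerical wall datum with a ≥ 2 exists when 2k ≥ 2Δh(h−1)² + 3h. (Case 7 of the proof of the Main Theorem.) -/
/-!
Write `D = Δh²a + c` and `s = ha + kb`. Since `Γ > 0`, (W2) forces `Γb ≤ 1 - a < 0`, so `b < 0`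
and hence `D > 0`; clearing denominators, `Γ < k/h` becomes `2Δhk(-b) < D` and (W2) becomes
`(a - 1)D ≤ 2Δk²b²`. Combining the two gives `h(a - 1) < k(-b)`, i.e. `s ≤ h - 1`, and
`j = 2Δh²a - D < 2Δhs`. The lower bound `j ≥ -Δh²` from (W3) then gives `2s ≥ 1 - h`, so
`s² ≤ (h - 1)²`, while `⟨w,w⟩ ≥ -2` together with `aD > 2Δhk(-b)a` gives `a - 1 ≤ Δs²`.
The bound on `k(-b)` is then `2k(-b) = 2(ha - s) ≤ 2ha + h - 1`.
-/

theorem mul_lt_of_mul_add_one_le_mul_sq {R : Type*} [CommRing R] [LinearOrder R]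
    [IsStrictOrderedRing R] {t h m n : R} (ht : 0 ≤ t) (hm : 0 ≤ m) (hn : 0 < n)
    (H : n * (t * h * m + 1) ≤ t * m ^ 2) : h * n < m := by
  by_contra! hle
  have : t * m * m ≤ t * m * (h * n) := mul_le_mul_of_nonneg_left hle (by positivity)
  nlinarith

section WallDatum

variable {Δ h k a b c : ℤ}

theorem mukaiPair_self_mk :
    mukaiPair Δ k (a, b, c) (a, b, c) = 2 * Δ * k ^ 2 * b ^ 2 - 2 * (a * c) := by
  simp only [mukaiPair]
  ring

theorem mukaiPair_mukaiV_mk : mukaiPair Δ k (a, b, c) (mukaiV Δ h) = Δ * h ^ 2 * a - c := by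
  simp only [mukaiPair, mukaiV]
  ring

theorem wallGamma_mk :
    wallGamma Δ h k (a, b, c) = -(2 * Δ * k ^ 2 * b) / (Δ * h ^ 2 * a + c) := by
  simp only [wallGamma]
  push_cast
  rfl

theorem IsWallDatum.wallGamma_pos_s8 {w : ℤ × ℤ × ℤ} (hk : k ≠ 0) (hW : IsWallDatum Δ h k w) :
    0 < wallGamma Δ h k w := by
  have hk2 : (0 : ℚ) < (k : ℚ) ^ 2 := pow_two_pos_of_ne_zero (Int.cast_ne_zero.mpr hk)
  exact lt_of_lt_of_le (div_pos (by positivity) (by positivity)) hW.2.1.1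

theorem IsWallDatum.b_neg (hk : k ≠ 0) (ha : 1 < a) (hW : IsWallDatum Δ h k (a, b, c)) :
    b < 0 := by
  have hΓb : wallGamma Δ h k (a, b, c) * b < 0 := by
    have hW2 : 0 ≤ -(wallGamma Δ h k (a, b, c) * b) + 1 - a := hW.2.2.1.2
    have : (1 : ℚ) < a := by exact_mod_cast ha
    linarith
  exact_mod_cast neg_of_mul_neg_right hΓb (hW.wallGamma_pos_s8 hk).le

theorem IsWallDatum.denom_pos (hΔ : 0 < Δ) (hk : k ≠ 0) (ha : 1 < a)
    (hW : IsWallDatum Δ h k (a, b, c)) : 0 < Δ * h ^ 2 * a + c := by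
  have hb := hW.b_neg hk ha
  have hnum : (0 : ℚ) < -(2 * Δ * k ^ 2 * b) := by
    have : 0 < Δ * k ^ 2 * -b := mul_pos (mul_pos hΔ (pow_two_pos_of_ne_zero hk)) (by omega)
    exact_mod_cast (by linarith : 0 < -(2 * Δ * k ^ 2 * b))
  have hΓ := hW.wallGamma_pos_s8 hk
  rw [wallGamma_mk] at hΓ
  exact_mod_cast (div_pos_iff_of_pos_left hnum).mp hΓ

theorem IsWallDatum.lt_denom (hh : 0 < h) (hk : 0 < k) (hD : 0 < Δ * h ^ 2 * a + c)
    (hW : IsWallDatum Δ h k (a, b, c)) : 2 * Δ * h * k * -b < Δ * h ^ 2 * a + c := by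
  have hΓ := hW.2.1.2
  rw [wallGamma_mk, div_lt_div_iff₀ (by exact_mod_cast hD) (by exact_mod_cast hh)] at hΓ
  have : k * (2 * Δ * h * k * -b) < k * (Δ * h ^ 2 * a + c) := by
    have : -(2 * Δ * k ^ 2 * b) * h < k * (Δ * h ^ 2 * a + c) := by exact_mod_cast hΓ
    linarith
  exact lt_of_mul_lt_mul_left this hk.le

theorem IsWallDatum.mul_denom_le (hD : 0 < Δ * h ^ 2 * a + c)
    (hW : IsWallDatum Δ h k (a, b, c)) :
    (a - 1) * (Δ * h ^ 2 * a + c) ≤ 2 * Δ * k ^ 2 * b ^ 2 := by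
  have hW2 : (a : ℚ) - 1 ≤ -(wallGamma Δ h k (a, b, c) * b) := by
    have : 0 ≤ -(wallGamma Δ h k (a, b, c) * b) + 1 - a := hW.2.2.1.2
    linarith
  have hΓb : -(wallGamma Δ h k (a, b, c) * b) =
      (2 * Δ * k ^ 2 * b ^ 2 : ℤ) / (Δ * h ^ 2 * a + c : ℤ) := by
    rw [wallGamma_mk]
    push_cast
    ring
  rw [hΓb, le_div_iff₀ (by exact_mod_cast hD)] at hW2
  exact_mod_cast hW2

theorem IsWallDatum.neg_two_le_mukaiPair_self_s8 {w : ℤ × ℤ × ℤ} (hW : IsWallDatum Δ h k w) :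
    -2 ≤ mukaiPair Δ k w w := by
  rcases hW.2.2.2.1 with ⟨hq, -⟩ | ⟨hq, -⟩ <;> omega

theorem IsWallDatum.neg_le_mukaiPair_mukaiV {w : ℤ × ℤ × ℤ} (hW : IsWallDatum Δ h k w) :
    -(Δ * h ^ 2) ≤ mukaiPair Δ k w (mukaiV Δ h) := by
  rcases hW.2.2.2.1 with ⟨-, hj, -⟩ | ⟨hq, hq', hj, -⟩ <;> omega

theorem IsWallDatum.bounds_of_one_lt (hΔ : 0 < Δ) (hh : 0 < h) (hk : 0 < k) (ha : 1 < a)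
    (hW : IsWallDatum Δ h k (a, b, c)) :
    b < 0 ∧ h * a + k * b ≤ h - 1 ∧
      -(Δ * h ^ 2) ≤ mukaiPair Δ k (a, b, c) (mukaiV Δ h) ∧
      mukaiPair Δ k (a, b, c) (mukaiV Δ h) < 2 * Δ * h * (h * a + k * b) ∧
      a ≤ Δ * (h - 1) ^ 2 + 1 ∧
      2 * k * (-b) < 2 * Δ * h * (h - 1) ^ 2 + 3 * h := by
  have hb := hW.b_neg hk.ne' ha
  have hD := hW.denom_pos hΔ hk.ne' ha
  have hlt := hW.lt_denom hh hk hD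
  have hle := hW.mul_denom_le hD
  have hj := hW.neg_le_mukaiPair_mukaiV
  have hq := hW.neg_two_le_mukaiPair_self_s8
  rw [mukaiPair_mukaiV_mk] at hj ⊢
  rw [mukaiPair_self_mk] at hq
  set s := h * a + k * b with hs
  have hs_le : s ≤ h - 1 := by
    have hkb : (a - 1) * (2 * Δ * h * (k * -b) + 1) ≤ 2 * Δ * (k * -b) ^ 2 := by
      nlinarith [mul_le_mul_of_nonneg_left hlt (by omega : 0 ≤ a - 1)]
    have : h * (a - 1) < k * -b :=
      mul_lt_of_mul_add_one_le_mul_sq (by omega) (by nlinarith) (by omega) hkb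
    linarith
  have hj_lt : Δ * h ^ 2 * a - c < 2 * Δ * h * s := by linarith
  have hs_ge : 1 - h ≤ 2 * s := by
    have : Δ * h * -h < Δ * h * (2 * s) := by linarith
    have := lt_of_mul_lt_mul_left this (by positivity)
    omega
  have hs_sq : s ^ 2 ≤ (h - 1) ^ 2 := sq_le_sq' (by omega) hs_le
  have ha_le : a - 1 ≤ Δ * s ^ 2 := by
    nlinarith [mul_le_mul_of_nonneg_left hlt (by omega : 0 ≤ a)]
  have ha_ub : a ≤ Δ * (h - 1) ^ 2 + 1 := by
    nlinarith [mul_le_mul_of_nonneg_left hs_sq hΔ.le]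
  refine ⟨hb, hs_le, hj, hj_lt, ha_ub, ?_⟩
  nlinarith [mul_le_mul_of_nonneg_left ha_ub hh.le]

end WallDatum

theorem wall_datum_case_a_ge_two_general (Δ h k : ℤ) (hΔ : 0 < Δ) (hh : 2 ≤ h) (hk : 0 < k) :
    (∀ a b c : ℤ, IsWallDatum Δ h k (a, b, c) → 2 ≤ a →
      b < 0 ∧ h * a + k * b ≤ h - 1 ∧
      -(Δ * h ^ 2) ≤ mukaiPair Δ k (a, b, c) (mukaiV Δ h) ∧
      mukaiPair Δ k (a, b, c) (mukaiV Δ h) < 2 * Δ * h * (h * a + k * b) ∧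
      a ≤ Δ * (h - 1) ^ 2 + 1 ∧
      2 * k * (-b) < 2 * Δ * h * (h - 1) ^ 2 + 3 * h) ∧
    (2 * k ≥ 2 * Δ * h * (h - 1) ^ 2 + 3 * h →
      ¬ ∃ a b c : ℤ, 2 ≤ a ∧ IsWallDatum Δ h k (a, b, c)) := by
  have bounds := fun a b c (hW : IsWallDatum Δ h k (a, b, c)) (ha : 2 ≤ a) ↦
    hW.bounds_of_one_lt hΔ (by omega) hk (by omega)
  refine ⟨bounds, fun hbig ⟨a, b, c, ha, hW⟩ ↦ ?_⟩
  obtain ⟨hb, -, -, -, -, hkb⟩ := bounds a b c hW ha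
  nlinarith

/-- Case 7 of the proof of the Main Theorem: for `h ≥ 2`, a numerical wall datum with
`a ≥ 2` satisfies `b < 0`, `ha + kb ≤ h − 1`, `−Δh² ≤ j(w) < 2Δh(ha + kb)`,
`a ≤ Δ(h−1)² + 1` and `2k(−b) < 2Δh(h−1)² + 3h`; in particular none exists when
`2k ≥ 2Δh(h−1)² + 3h`. -/
theorem wall_datum_case_a_ge_two (Δ h k : ℤ) (hΔ : 0 < Δ) (hh : 2 ≤ h) (hk : 0 < k)
    (hgcd : Int.gcd h k = 1) :
    (∀ a b c : ℤ, IsWallDatum Δ h k (a, b, c) → 2 ≤ a →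
      b < 0 ∧ h * a + k * b ≤ h - 1 ∧
      -(Δ * h ^ 2) ≤ mukaiPair Δ k (a, b, c) (mukaiV Δ h) ∧
      mukaiPair Δ k (a, b, c) (mukaiV Δ h) < 2 * Δ * h * (h * a + k * b) ∧
      a ≤ Δ * (h - 1) ^ 2 + 1 ∧
      2 * k * (-b) < 2 * Δ * h * (h - 1) ^ 2 + 3 * h) ∧
    (2 * k ≥ 2 * Δ * h * (h - 1) ^ 2 + 3 * h →
      ¬ ∃ a b c : ℤ, 2 ≤ a ∧ IsWallDatum Δ h k (a, b, c)) :=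
  wall_datum_case_a_ge_two_general Δ h k hΔ hh hk
end
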